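/- arXiv:1311.0497 — 8 statements merged into one kernel-verified Lean document; each statement's English description precedes it below -/
import Mathlib

section
/- Let X and Y be real vector spaces, D ⊆ X a convex set, and A : D → Y an operator of type ql. Then for every finite collection of points x₁, x₂, …, xₙ ∈ D and every x in the convex hull of {x₁, …, xₙ}, the image A(x) lies in the convex hull of {A(x₁), …, A(xₙ)}. -/
/-!
A point of `convexHull s` lies in the hull of finitely many points of `s`, so it suffices to treat
a finite set, by induction on it: a point `x` of `convexHull (insert a t)` lies on a segment
`[a, z]` with `z ∈ convexHull t ⊆ D`, so `A x` lies on `[A a, A z]`, whose endpoints are in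
`convexHull (A '' insert a t)` by induction.
-/

open Set

section

variable {X Y : Type*} [AddCommGroup X] [Module ℝ X] [AddCommGroup Y] [Module ℝ Y]

/-- The operators of type ql. -/
def MapsSegmentsOn (D : Set X) (A : X → Y) : Prop :=
  ∀ x ∈ D, ∀ y ∈ D, ∀ z ∈ segment ℝ x y, z ∈ D → A z ∈ segment ℝ (A x) (A y)

namespace MapsSegmentsOn

variable {D : Set X} {A : X → Y}

theorem apply_mem_convexHull_image_finset (hA : MapsSegmentsOn D A) (hD : Convex ℝ D)
    {s : Finset X} (hs : (s : Set X) ⊆ D) {x : X} (hx : x ∈ convexHull ℝ (s : Set X)) :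
    A x ∈ convexHull ℝ (A '' s) := by
  have hne : s.Nonempty := Finset.coe_nonempty.mp (convexHull_nonempty_iff.mp ⟨x, hx⟩)
  induction hne using Finset.Nonempty.cons_induction generalizing x with
  | singleton a =>
    rw [Finset.coe_singleton, convexHull_singleton, mem_singleton_iff] at hx
    exact subset_convexHull ℝ _ ⟨x, by simp [hx], rfl⟩
  | cons a t ha ht ih =>
    rw [Finset.coe_cons] at hs hx ⊢
    rw [convexHull_insert ht.to_set, mem_convexJoin] at hx
    obtain ⟨a, rfl, z, hz, hxz⟩ := hx
    have htD : (t : Set X) ⊆ D := (subset_insert a _).trans hs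
    have hzD : z ∈ D := convexHull_min htD hD hz
    have hxD : x ∈ D := hD.segment_subset (hs (mem_insert a _)) hzD hxz
    have hAa : A a ∈ convexHull ℝ (A '' insert a (t : Set X)) :=
      subset_convexHull ℝ _ ⟨a, mem_insert a _, rfl⟩
    have hAz : A z ∈ convexHull ℝ (A '' insert a (t : Set X)) :=
      convexHull_mono (image_mono (subset_insert a _)) (ih htD hz)
    exact (convex_convexHull ℝ _).segment_subset hAa hAz
      (hA a (hs (mem_insert a _)) z hzD x hxz hxD)

theorem apply_mem_convexHull_image (hA : MapsSegmentsOn D A) (hD : Convex ℝ D) {s : Set X}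
    (hs : s ⊆ D) {x : X} (hx : x ∈ convexHull ℝ s) : A x ∈ convexHull ℝ (A '' s) := by
  rw [convexHull_eq_union_convexHull_finite_subsets, mem_iUnion₂] at hx
  obtain ⟨t, hts, hxt⟩ := hx
  exact convexHull_mono (image_mono hts) (hA.apply_mem_convexHull_image_finset hD (hts.trans hs) hxt)

end MapsSegmentsOn

end

theorem stmt_0 {X Y : Type*} [AddCommGroup X] [Module ℝ X] [AddCommGroup Y] [Module ℝ Y]
    (D : Set X) (hD : Convex ℝ D) (A : X → Y)
    (hql : ∀ x ∈ D, ∀ y ∈ D, ∀ z ∈ segment ℝ x y, z ∈ D → A z ∈ segment ℝ (A x) (A y))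
    (s : Finset X) (hs : (s : Set X) ⊆ D)
    (x : X) (hx : x ∈ convexHull ℝ (s : Set X)) :
    A x ∈ convexHull ℝ (A '' (s : Set X)) :=
  MapsSegmentsOn.apply_mem_convexHull_image hql hD hs hx
end

section
/- A function A : D ⊆ ℝ → ℝ defined on an interval D is of type ql if and only if A is monotone (either nondecreasing or nonincreasing) on D. -/
theorem stmt_2 (D : Set ℝ) (hD : D.OrdConnected) (A : ℝ → ℝ) :
    (∀ x ∈ D, ∀ y ∈ D, ∀ z ∈ D, z ∈ Set.uIcc x y → A z ∈ Set.uIcc (A x) (A y)) ↔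
      (MonotoneOn A D ∨ AntitoneOn A D) := by
  constructor
  · intro H
    by_contra hc
    push_neg at hc
    obtain ⟨hmono, hanti⟩ := hc
    simp only [MonotoneOn, not_forall] at hmono
    simp only [AntitoneOn, not_forall] at hanti
    obtain ⟨a, ha, b, hb, hab, hfab⟩ := hmono
    obtain ⟨c, hc, d, hd, hcd, hfcd⟩ := hanti
    push_neg at hfab hfcd
    -- hfab : A b < A a, hfcd : A c < A d
    have hm : min a c ∈ D := by
      rcases min_cases a c with ⟨h, _⟩ | ⟨h, _⟩ <;> rw [h] <;> assumption
    have hM : max b d ∈ D := by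
      rcases max_cases b d with ⟨h, _⟩ | ⟨h, _⟩ <;> rw [h] <;> assumption
    have hma : min a c ≤ a := min_le_left _ _
    have hmc : min a c ≤ c := min_le_right _ _
    have hbM : b ≤ max b d := le_max_left _ _
    have hdM : d ≤ max b d := le_max_right _ _
    have h1 := H (min a c) hm b hb a ha
      (Set.mem_uIcc.mpr (Or.inl ⟨hma, hab⟩))
    have h2 := H a ha (max b d) hM b hb
      (Set.mem_uIcc.mpr (Or.inl ⟨hab, hbM⟩))
    have h3 := H (min a c) hm d hd c hc
      (Set.mem_uIcc.mpr (Or.inl ⟨hmc, hcd⟩))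
    have h4 := H c hc (max b d) hM d hd
      (Set.mem_uIcc.mpr (Or.inl ⟨hcd, hdM⟩))
    rw [Set.mem_uIcc] at h1 h2 h3 h4
    rcases h1 with ⟨h1a, h1b⟩ | ⟨h1a, h1b⟩ <;>
      rcases h2 with ⟨h2a, h2b⟩ | ⟨h2a, h2b⟩ <;>
      rcases h3 with ⟨h3a, h3b⟩ | ⟨h3a, h3b⟩ <;>
      rcases h4 with ⟨h4a, h4b⟩ | ⟨h4a, h4b⟩ <;>
      linarith
  · rintro (h | h) x hx y hy z hz hzm <;> rw [Set.mem_uIcc] at hzm ⊢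
    · rcases hzm with ⟨h1, h2⟩ | ⟨h1, h2⟩
      · exact Or.inl ⟨h hx hz h1, h hz hy h2⟩
      · exact Or.inr ⟨h hy hz h1, h hz hx h2⟩
    · rcases hzm with ⟨h1, h2⟩ | ⟨h1, h2⟩
      · exact Or.inr ⟨h hz hy h2, h hx hz h1⟩
      · exact Or.inl ⟨h hz hx h2, h hy hz h1⟩
end

section
/- Let X be a real Banach space with dual X*, K ⊆ X, and A : K → X*, a : K → X. Define G : K → set K by G(y) = {x ∈ K : ⟨A(y) − A(x), a(x)⟩ ≥ 0}. If K is convex and A is of type ql, then G is a KKM mapping: for any finite set y₁, …, yₙ ∈ K, the convex hull of {y₁, …, yₙ} is contained in ⋃ᵢ G(yᵢ). -/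
/-!
For fixed `v`, the type ql condition makes `u ↦ ⟨A u, v⟩` quasiconvex on `K`, so its sublevel set
at height `max_i ⟨A yᵢ, v⟩` is convex and contains every `yᵢ`, hence their convex hull. Taking
`v = a x` for a point `x` of the hull gives some `yᵢ` with `⟨A x, a x⟩ ≤ ⟨A yᵢ, a x⟩`, i.e.
`x ∈ G(yᵢ)`.
-/

open Set

def IsTypeQl (𝕜 : Type*) {E F : Type*} [Semiring 𝕜] [PartialOrder 𝕜] [AddCommMonoid E]
    [AddCommMonoid F] [Module 𝕜 E] [Module 𝕜 F] (K : Set E) (A : E → F) : Prop :=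
  ∀ x ∈ K, ∀ y ∈ K, ∀ z ∈ segment 𝕜 x y, z ∈ K → A z ∈ segment 𝕜 (A x) (A y)

theorem QuasiconvexOn.exists_le_of_mem_convexHull {𝕜 E β : Type*} [Field 𝕜] [LinearOrder 𝕜]
    [IsStrictOrderedRing 𝕜] [AddCommGroup E] [Module 𝕜 E] [LinearOrder β] {K : Set E}
    {f : E → β} (hf : QuasiconvexOn 𝕜 K f) {s : Finset E} (hs : (s : Set E) ⊆ K) {x : E}
    (hx : x ∈ convexHull 𝕜 (s : Set E)) : ∃ y ∈ s, f x ≤ f y := by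
  have hne : s.Nonempty := Finset.coe_nonempty.mp (convexHull_nonempty_iff.mp ⟨x, hx⟩)
  obtain ⟨y, hy, hmax⟩ := s.exists_max_image f hne
  have hsub : (s : Set E) ⊆ {u ∈ K | f u ≤ f y} := fun u hu => ⟨hs hu, hmax u hu⟩
  exact ⟨y, hy, (convexHull_min hsub (hf (f y)) hx).2⟩

theorem IsTypeQl.quasiconvexOn_comp {𝕜 E F : Type*} [Field 𝕜] [LinearOrder 𝕜]
    [IsStrictOrderedRing 𝕜] [AddCommGroup E] [AddCommGroup F] [Module 𝕜 E] [Module 𝕜 F]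
    {K : Set E} {A : E → F} (hA : IsTypeQl 𝕜 K A) (hK : Convex 𝕜 K) (g : F →ₗ[𝕜] 𝕜) :
    QuasiconvexOn 𝕜 K (g ∘ A) := by
  refine quasiconvexOn_iff_le_max.mpr ⟨hK, fun x hx y hy a b ha hb hab => ?_⟩
  have hz : a • x + b • y ∈ segment 𝕜 x y := ⟨a, b, ha, hb, hab, rfl⟩
  have himage : g (A (a • x + b • y)) ∈ segment 𝕜 (g (A x)) (g (A y)) := by
    simpa using image_segment 𝕜 g.toAffineMap (A x) (A y) ▸
      mem_image_of_mem g.toAffineMap (hA x hx y hy _ hz (hK hx hy ha hb hab))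
  rw [segment_eq_uIcc] at himage
  exact himage.2

theorem stmt_3_general {X : Type*} [NormedAddCommGroup X] [NormedSpace ℝ X]
    (K : Set X) (hK : Convex ℝ K)
    (A : X → StrongDual ℝ X) (a : X → X)
    (hql : ∀ x ∈ K, ∀ y ∈ K, ∀ z ∈ segment ℝ x y, z ∈ K → A z ∈ segment ℝ (A x) (A y))
    (s : Finset X) (hs : (s : Set X) ⊆ K)
    (x : X) (hx : x ∈ convexHull ℝ (s : Set X)) :
    ∃ y ∈ s, x ∈ {u | u ∈ K ∧ (A y - A u) (a u) ≥ 0} := by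
  have hA : IsTypeQl ℝ K A := hql
  have hquasi := hA.quasiconvexOn_comp hK (ContinuousLinearMap.apply ℝ ℝ (a x)).toLinearMap
  obtain ⟨y, hy, hle⟩ := hquasi.exists_le_of_mem_convexHull hs hx
  refine ⟨y, hy, convexHull_min hs hK hx, ?_⟩
  simpa [sub_nonneg] using hle

theorem stmt_3 {X : Type*} [NormedAddCommGroup X] [NormedSpace ℝ X] [CompleteSpace X]
    (K : Set X) (hK : Convex ℝ K)
    (A : X → StrongDual ℝ X) (a : X → X)
    (hql : ∀ x ∈ K, ∀ y ∈ K, ∀ z ∈ segment ℝ x y, z ∈ K → A z ∈ segment ℝ (A x) (A y))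
    (s : Finset X) (hs : (s : Set X) ⊆ K)
    (x : X) (hx : x ∈ convexHull ℝ (s : Set X)) :
    ∃ y ∈ s, x ∈ {u | u ∈ K ∧ (A y - A u) (a u) ≥ 0} :=
  stmt_3_general K hK A a hql s hs x hx
end

section
/- Let X be a real Banach space, K ⊆ X convex, A : K → X* of type strict ql, and a : K → X continuous on line segments. If x ∈ K solves the inverted Minty inequality, i.e. ⟨A(y) − A(x), a(y)⟩ ≥ 0 for all y ∈ K, then x solves the inverted Stampacchia inequality, i.e. ⟨A(z) − A(x), a(x)⟩ ≥ 0 for all z ∈ K. -/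
/-! Along the segment `y = x + t (z - x)`, `0 < t < 1`, strict quasi-linearity gives
`A y - A x = β (A z - A x)` with `β > 0`, so the Minty inequality at `y` says
`(A z - A x) (a y) ≥ 0`. Letting `t → 0` and using continuity of `a` on line segments
yields `(A z - A x) (a x) ≥ 0`. -/

open Filter Topology Set

/-- The operators "of type strict ql". -/
def StrictQuasiLinearOn {E F : Type*} [AddCommGroup E] [Module ℝ E] [AddCommGroup F] [Module ℝ F]
    (K : Set E) (A : E → F) : Prop :=
  ∀ x ∈ K, ∀ y ∈ K, x ≠ y → ∀ z ∈ openSegment ℝ x y, z ∈ K → A z ∈ openSegment ℝ (A x) (A y)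

theorem exists_sub_eq_smul_sub_of_mem_openSegment {𝕜 E : Type*} [Field 𝕜] [LinearOrder 𝕜]
    [IsStrictOrderedRing 𝕜] [AddCommGroup E] [Module 𝕜 E] {u v p : E}
    (hp : p ∈ openSegment 𝕜 u v) : ∃ β ∈ Ioo (0 : 𝕜) 1, p - u = β • (v - u) := by
  rw [openSegment_eq_image'] at hp
  obtain ⟨β, hβ, rfl⟩ := hp
  exact ⟨β, hβ, add_sub_cancel_left u _⟩

theorem StrictQuasiLinearOn.apply_nonneg_of_minty {E : Type*} [AddCommGroup E] [Module ℝ E]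
    {F : Type*} [TopologicalSpace F] [AddCommGroup F] [Module ℝ F] {K : Set E}
    {A : E → StrongDual ℝ F} {a : E → F}
    (hA : StrictQuasiLinearOn K A) {x z : E} (hx : x ∈ K) (hz : z ∈ K) (hxz : x ≠ z)
    (hM : ∀ y ∈ K, 0 ≤ (A y - A x) (a y)) {t : ℝ} (ht : t ∈ Ioo 0 1)
    (hy : x + t • (z - x) ∈ K) : 0 ≤ (A z - A x) (a (x + t • (z - x))) := by
  have hseg : x + t • (z - x) ∈ openSegment ℝ x z := by
    rw [openSegment_eq_image']
    exact ⟨t, ht, rfl⟩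
  obtain ⟨β, hβ, hAy⟩ :=
    exists_sub_eq_smul_sub_of_mem_openSegment (hA x hx z hz hxz _ hseg hy)
  have hMy := hM _ hy
  rw [hAy, smul_apply, smul_eq_mul] at hMy
  exact nonneg_of_mul_nonneg_right hMy hβ.1

theorem stmt_8_general {X : Type*} [NormedAddCommGroup X] [NormedSpace ℝ X]
    (K : Set X) (hK : Convex ℝ K)
    (A : X → StrongDual ℝ X) (a : X → X)
    (hsql : ∀ x ∈ K, ∀ y ∈ K, x ≠ y → ∀ z ∈ openSegment ℝ x y, z ∈ K →
      A z ∈ openSegment ℝ (A x) (A y))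
    (ha : ∀ x ∈ K, ∀ (t : ℕ → ℝ), Tendsto t atTop (𝓝 0) → ∀ y : X,
      (∀ n, x + t n • y ∈ K) → Tendsto (fun n => a (x + t n • y)) atTop (𝓝 (a x)))
    (x : X) (hx : x ∈ K)
    (hM : ∀ y ∈ K, (A y - A x) (a y) ≥ 0) :
    ∀ z ∈ K, (A z - A x) (a x) ≥ 0 := by
  intro z hz
  rcases eq_or_ne x z with rfl | hxz
  · simp
  obtain ⟨t, -, ht01, ht0⟩ := exists_seq_strictAnti_tendsto' (zero_lt_one' ℝ)
  have hyK : ∀ n, x + t n • (z - x) ∈ K := fun n =>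
    hK.add_smul_sub_mem hx hz (Ioo_subset_Icc_self (ht01 n))
  have hnonneg : ∀ n, 0 ≤ (A z - A x) (a (x + t n • (z - x))) := fun n =>
    StrictQuasiLinearOn.apply_nonneg_of_minty hsql hx hz hxz hM (ht01 n) (hyK n)
  have hlim := ((A z - A x).continuous.tendsto _).comp (ha x hx t ht0 (z - x) hyK)
  exact ge_of_tendsto hlim (Eventually.of_forall hnonneg)

theorem stmt_8 {X : Type*} [NormedAddCommGroup X] [NormedSpace ℝ X] [CompleteSpace X]
    (K : Set X) (hK : Convex ℝ K)
    (A : X → StrongDual ℝ X) (a : X → X)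
    (hsql : ∀ x ∈ K, ∀ y ∈ K, x ≠ y → ∀ z ∈ openSegment ℝ x y, z ∈ K →
      A z ∈ openSegment ℝ (A x) (A y))
    (ha : ∀ x ∈ K, ∀ (t : ℕ → ℝ), Tendsto t atTop (𝓝 0) → ∀ y : X,
      (∀ n, x + t n • y ∈ K) → Tendsto (fun n => a (x + t n • y)) atTop (𝓝 (a x)))
    (x : X) (hx : x ∈ K)
    (hM : ∀ y ∈ K, (A y - A x) (a y) ≥ 0) :
    ∀ z ∈ K, (A z - A x) (a x) ≥ 0 :=
  stmt_8_general K hK A a hsql ha x hx hM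
end

section
/- Let K = [−1,1] × [−1,1] ⊆ ℝ², A : K → ℝ² given by A(x,y) = (x²y, xy), and a : K → ℝ² given by a(x,y) = (1, −x). Then there is no point (x,y) ∈ K such that ⟨A(u,v) − A(x,y), a(x,y)⟩ ≥ 0 for all (u,v) ∈ K, where ⟨·,·⟩ is the standard inner product on ℝ². -/
theorem stmt_9 :
    ¬ ∃ p ∈ Set.Icc ((-1 : ℝ), (-1 : ℝ)) (1, 1),
      ∀ q ∈ Set.Icc ((-1 : ℝ), (-1 : ℝ)) (1, 1),
        (q.1 ^ 2 * q.2 - p.1 ^ 2 * p.2) * 1 + (q.1 * q.2 - p.1 * p.2) * (-p.1) ≥ 0 := by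
  rintro ⟨p, hp, h⟩
  obtain ⟨⟨h1, h2⟩, ⟨h3, h4⟩⟩ := hp
  simp only [Prod.fst, Prod.snd] at h1 h2 h3 h4
  rcases lt_or_eq_of_le h3 with hlt | heq
  · have := h (1, -1) ⟨⟨by norm_num, by norm_num⟩, ⟨by norm_num, by norm_num⟩⟩
    simp only at this
    nlinarith
  · have := h (1/2, 1) ⟨⟨by norm_num, by norm_num⟩, ⟨by norm_num, by norm_num⟩⟩
    simp only at this
    nlinarith
end

section
/- Let K = [−1,1], A : K → ℝ defined by A(x) = −2x−1 for x ∈ [−1,−1/2], A(x) = 2x+1 for x ∈ (−1/2, 0], A(x) = −2x+1 for x ∈ (0,1], and a : K → ℝ defined by a(x) = −(2/3)x + 1/3 for x ∈ [−1, 1/2], a(x) = −2x+1 for x ∈ (1/2, 1]. Then x₀ = −1/2 satisfies (A(y) − A(x₀))·a(y) ≥ 0 for all y ∈ K, but there exists y ∈ K (namely y = 3/4) with (A(y) − A(x₀))·a(x₀) < 0. -/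
theorem stmt_11 (A a : ℝ → ℝ)
    (hA1 : ∀ x ∈ Set.Icc (-1 : ℝ) (-1/2), A x = -2 * x - 1)
    (hA2 : ∀ x ∈ Set.Ioc (-1/2 : ℝ) 0, A x = 2 * x + 1)
    (hA3 : ∀ x ∈ Set.Ioc (0 : ℝ) 1, A x = -2 * x + 1)
    (ha1 : ∀ x ∈ Set.Icc (-1 : ℝ) (1/2), a x = -(2/3) * x + 1/3)
    (ha2 : ∀ x ∈ Set.Ioc (1/2 : ℝ) 1, a x = -2 * x + 1) :
    (∀ y ∈ Set.Icc (-1 : ℝ) 1, (A y - A (-1/2)) * a y ≥ 0) ∧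
      (3 / 4 : ℝ) ∈ Set.Icc (-1 : ℝ) 1 ∧ (A (3/4) - A (-1/2)) * a (-1/2) < 0 := by
  have hA0 : A (-1/2) = 0 := by
    rw [hA1 (-1/2) (by constructor <;> norm_num)]; norm_num
  refine ⟨?_, by norm_num, ?_⟩
  · intro y hy
    obtain ⟨h1, h2⟩ := hy
    rcases le_or_gt y (-1/2) with hc1 | hc1
    · rw [hA0, hA1 y ⟨h1, hc1⟩, ha1 y ⟨h1, by linarith⟩]
      nlinarith
    · rcases le_or_gt y 0 with hc2 | hc2
      · rw [hA0, hA2 y ⟨hc1, hc2⟩, ha1 y ⟨h1, by linarith⟩]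
        nlinarith
      · rcases le_or_gt y (1/2) with hc3 | hc3
        · rw [hA0, hA3 y ⟨hc2, h2⟩, ha1 y ⟨h1, hc3⟩]
          nlinarith [sq_nonneg (1 - 2*y)]
        · rw [hA0, hA3 y ⟨hc2, h2⟩, ha2 y ⟨hc3, h2⟩]
          nlinarith
  · rw [hA0, hA3 (3/4) (by constructor <;> norm_num),
      ha1 (-1/2) (by constructor <;> norm_num)]
    norm_num
end

section
/- Let K = [−1,1], A : K → ℝ defined by A(x) = −1 for x ∈ [−1,0) and A(x) = 1 for x ∈ [0,1], and a(x) = x. Then A is of type ql but not of type strict ql, x₀ = 1/2 satisfies (A(y) − A(x₀))·a(y) ≥ 0 for all y ∈ K, but (A(−1/2) − A(x₀))·a(x₀) < 0. -/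
theorem stmt_12 (A a : ℝ → ℝ)
    (hA1 : ∀ x ∈ Set.Ico (-1 : ℝ) 0, A x = -1)
    (hA2 : ∀ x ∈ Set.Icc (0 : ℝ) 1, A x = 1)
    (ha : ∀ x, a x = x) :
    (∀ x ∈ Set.Icc (-1 : ℝ) 1, ∀ y ∈ Set.Icc (-1 : ℝ) 1, ∀ z ∈ Set.Icc (-1 : ℝ) 1,
        z ∈ Set.uIcc x y → A z ∈ Set.uIcc (A x) (A y)) ∧
    ¬ (∀ x ∈ Set.Icc (-1 : ℝ) 1, ∀ y ∈ Set.Icc (-1 : ℝ) 1, x ≠ y →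
        ∀ z ∈ Set.Icc (-1 : ℝ) 1, z ∈ Set.uIoo x y → A z ∈ Set.uIoo (A x) (A y)) ∧
    (∀ y ∈ Set.Icc (-1 : ℝ) 1, (A y - A (1/2)) * a y ≥ 0) ∧
    (A (-1/2) - A (1/2)) * a (1/2) < 0 := by
  have hval : ∀ z ∈ Set.Icc (-1 : ℝ) 1, A z = -1 ∨ A z = 1 := by
    intro z hz
    rcases lt_or_ge z 0 with h | h
    · exact Or.inl (hA1 z ⟨hz.1, h⟩)
    · exact Or.inr (hA2 z ⟨h, hz.2⟩)
  have hmono : ∀ x ∈ Set.Icc (-1 : ℝ) 1, ∀ z ∈ Set.Icc (-1 : ℝ) 1, x ≤ z → A x ≤ A z := by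
    intro x hx z hz hxz
    rcases lt_or_ge x 0 with h | h
    · rw [hA1 x ⟨hx.1, h⟩]
      rcases hval z hz with h' | h' <;> rw [h'] <;> norm_num
    · rw [hA2 x ⟨h, hx.2⟩, hA2 z ⟨le_trans h hxz, hz.2⟩]
  refine ⟨?_, ?_, ?_, ?_⟩
  · intro x hx y hy z hz hzm
    rcases le_total x y with hxy | hxy
    · rw [Set.uIcc_of_le hxy] at hzm
      exact Set.mem_uIcc.2 (Or.inl ⟨hmono x hx z hz hzm.1, hmono z hz y hy hzm.2⟩)
    · rw [Set.uIcc_of_ge hxy] at hzm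
      exact Set.mem_uIcc.2 (Or.inr ⟨hmono y hy z hz hzm.1, hmono z hz x hx hzm.2⟩)
  · intro H
    have h := H (-1) (by norm_num) 1 (by norm_num) (by norm_num) 0 (by norm_num)
      (by simp [Set.uIoo])
    rw [hA1 (-1) (by norm_num), hA2 1 (by norm_num), hA2 0 (by norm_num)] at h
    simp [Set.uIoo] at h
  · intro y hy
    rw [ha]
    rcases lt_or_ge y 0 with h | h
    · rw [hA1 y ⟨hy.1, h⟩, hA2 (1/2) (by norm_num)]
      nlinarith
    · rw [hA2 y ⟨h, hy.2⟩, hA2 (1/2) (by norm_num)]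
      norm_num
  · rw [ha, hA1 (-1/2) (by norm_num), hA2 (1/2) (by norm_num)]
    norm_num
end

section
/- Let X be a real Banach space, K ⊆ X convex, A : K → X* of type strict ql and monotone relative to a, with a : K → X continuous on line segments. Then the solution sets of the inverted Stampacchia inequality VI_iS(A,a,K) and of the inverted Minty inequality VI_iM(A,a,K) coincide: {x ∈ K : ∀y ∈ K, ⟨A(y) − A(x), a(x)⟩ ≥ 0} = {x ∈ K : ∀y ∈ K, ⟨A(y) − A(x), a(y)⟩ ≥ 0}. -/
open Filter Topology

/-!
Stampacchia solutions are Minty solutions by monotonicity alone. Conversely, if `x` solves the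
Minty problem and `z = x + t • (y - x)` with `t ∈ (0, 1)`, the strict ql property writes
`A z - A x` as a positive multiple of `A y - A x`, so Minty at `z` gives
`(A y - A x) (a z) ≥ 0`; letting `t → 0` and using continuity of `a` on segments yields
`(A y - A x) (a x) ≥ 0`.
-/

lemma sub_apply_nonneg_of_mem_openSegment {X : Type*} [AddCommGroup X] [Module ℝ X]
    [TopologicalSpace X] {φ ψ χ : StrongDual ℝ X} {v : X}
    (hχ : χ ∈ openSegment ℝ φ ψ) (hv : 0 ≤ (χ - φ) v) : 0 ≤ (ψ - φ) v := by
  rw [openSegment_eq_image'] at hχ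
  obtain ⟨b, ⟨hb, -⟩, rfl⟩ := hχ
  rw [add_sub_cancel_left, smul_apply, smul_eq_mul] at hv
  exact nonneg_of_mul_nonneg_right hv hb

theorem stmt_17_general {X : Type*} [NormedAddCommGroup X] [NormedSpace ℝ X]
    (K : Set X) (hK : Convex ℝ K)
    (A : X → StrongDual ℝ X) (a : X → X)
    (hsql : ∀ x ∈ K, ∀ y ∈ K, x ≠ y → ∀ z ∈ openSegment ℝ x y, z ∈ K →
      A z ∈ openSegment ℝ (A x) (A y))
    (hmon : ∀ x ∈ K, ∀ y ∈ K, (A x - A y) (a x - a y) ≥ 0)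
    (ha : ∀ x ∈ K, ∀ (t : ℕ → ℝ), Tendsto t atTop (𝓝 0) → ∀ y : X,
      (∀ n, x + t n • y ∈ K) → Tendsto (fun n => a (x + t n • y)) atTop (𝓝 (a x))) :
    {x | x ∈ K ∧ ∀ y ∈ K, (A y - A x) (a x) ≥ 0} =
      {x | x ∈ K ∧ ∀ y ∈ K, (A y - A x) (a y) ≥ 0} := by
  ext x
  constructor
  · rintro ⟨hx, hstamp⟩
    refine ⟨hx, fun y hy => ?_⟩
    have hmon_xy := hmon y hy x hx
    rw [map_sub] at hmon_xy
    linarith [hstamp y hy]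
  rintro ⟨hx, hminty⟩
  refine ⟨hx, fun y hy => ?_⟩
  rcases eq_or_ne x y with rfl | hxy
  · simp
  obtain ⟨t, -, ht, ht_lim⟩ := exists_seq_strictAnti_tendsto' (zero_lt_one' ℝ)
  have hseg : ∀ n, x + t n • (y - x) ∈ openSegment ℝ x y := fun n => by
    rw [openSegment_eq_image']
    exact ⟨t n, ht n, rfl⟩
  have hmem : ∀ n, x + t n • (y - x) ∈ K := fun n => hK.openSegment_subset hx hy (hseg n)
  have hnonneg : ∀ n, 0 ≤ (A y - A x) (a (x + t n • (y - x))) := fun n =>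
    sub_apply_nonneg_of_mem_openSegment (hsql x hx y hy hxy _ (hseg n) (hmem n))
      (hminty _ (hmem n))
  exact ge_of_tendsto' (((A y - A x).continuous.tendsto _).comp (ha x hx t ht_lim _ hmem))
    hnonneg

theorem stmt_17 {X : Type*} [NormedAddCommGroup X] [NormedSpace ℝ X] [CompleteSpace X]
    (K : Set X) (hK : Convex ℝ K)
    (A : X → StrongDual ℝ X) (a : X → X)
    (hsql : ∀ x ∈ K, ∀ y ∈ K, x ≠ y → ∀ z ∈ openSegment ℝ x y, z ∈ K →
      A z ∈ openSegment ℝ (A x) (A y))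
    (hmon : ∀ x ∈ K, ∀ y ∈ K, (A x - A y) (a x - a y) ≥ 0)
    (ha : ∀ x ∈ K, ∀ (t : ℕ → ℝ), Tendsto t atTop (𝓝 0) → ∀ y : X,
      (∀ n, x + t n • y ∈ K) → Tendsto (fun n => a (x + t n • y)) atTop (𝓝 (a x))) :
    {x | x ∈ K ∧ ∀ y ∈ K, (A y - A x) (a x) ≥ 0} =
      {x | x ∈ K ∧ ∀ y ∈ K, (A y - A x) (a y) ≥ 0} :=
  stmt_17_general K hK A a hsql hmon ha
end
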